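/- Let D be a bipartite digraph with out-radius r >= 3 and order n. Then the number of arcs satisfies |A(D)| <= ceil(n(n-2)/4) + r - 4 + floor((n-r+3)^2/4). -/

import Mathlib

variable {V : Type*}

/-- `ReachWithin A k u v` means the directed distance from `u` to `v` is at most `k`. -/
def ReachWithin (A : V → V → Prop) : ℕ → V → V → Prop
  | 0, u, v => u = v
  | k+1, u, v => u = v ∨ ∃ w, A u w ∧ ReachWithin A k w v

/-- out-eccentricity of `v` is at most `r`. -/
def outEccLe (A : V → V → Prop) (r : ℕ) (v : V) : Prop :=
  ∀ u, ReachWithin A r v u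

/-- in-eccentricity of `v` is at most `r`. -/
def inEccLe (A : V → V → Prop) (r : ℕ) (v : V) : Prop :=
  ∀ u, ReachWithin A r u v

/-- The out-radius of the digraph `A` equals `r`. -/
def outRadiusIs (A : V → V → Prop) (r : ℕ) : Prop :=
  (∃ v, outEccLe A r v) ∧ ∀ v, ¬ outEccLe A (r - 1) v

/-- A digraph is strongly connected (biconnected) if every vertex reaches every other. -/
def StronglyConnected (A : V → V → Prop) : Prop :=
  ∀ u v, ∃ k, ReachWithin A k u v

/-- Number of arcs of the digraph. -/
noncomputable def arcCard (A : V → V → Prop) : ℕ :=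
  {p : V × V | A p.1 p.2}.ncard

noncomputable def outDeg (A : V → V → Prop) (v : V) : ℕ :=
  {w | A v w}.ncard

noncomputable def inDeg (A : V → V → Prop) (v : V) : ℕ :=
  {w | A w v}.ncard

noncomputable def totalDeg (A : V → V → Prop) (v : V) : ℕ :=
  outDeg A v + inDeg A v

/-- The directed distance from `u` to `v` equals `k`. -/
def DistEq (A : V → V → Prop) (k : ℕ) (u v : V) : Prop :=
  ReachWithin A k u v ∧ ∀ j < k, ¬ ReachWithin A j u v

/-- out-eccentricity as a natural number. -/
noncomputable def outEcc (A : V → V → Prop) (v : V) : ℕ :=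
  sInf {k | outEccLe A k v}

/-- in-eccentricity as a natural number. -/
noncomputable def inEcc (A : V → V → Prop) (v : V) : ℕ :=
  sInf {k | inEccLe A k v}

/-- `P` is a bipartition of the digraph `A`: every arc joins the two classes. -/
def Bipartition (A : V → V → Prop) (P : V → Prop) : Prop :=
  ∀ u v, A u v → (P u ↔ ¬ P v)

/-!
Fix a vertex `v` of out-eccentricity `r` and sort the vertices by their distance from `v` into
levels `L₀, …, L_r`, all nonempty. In a bipartite digraph the parity of the level of a vertex
determines its class, so an arc leaves a vertex of level `i` towards a vertex of opposite parity
and level at most `i + 1`; there are at most `∑ |Lᵢ| |Lᵢ₊₁| + |odd| |even|` such pairs. An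
odd-level vertex joined to all its admissible targets would reach every vertex within `r - 1`
steps, contradicting `rad⁺ = r`, so each odd-level vertex misses at least one of them:
`|A| ≤ ∑ |Lᵢ| |Lᵢ₊₁| + |odd| (|even| - 1)`. Adjacent products of a sequence sum to at most a
quarter of the square of its total, which bounds the first term by `⌊(n - r + 3)² / 4⌋ + r - 4`;
the second is at most `(n - 1)² / 4`.
-/

open Finset

namespace ReachWithin

variable {A : V → V → Prop}

theorem refl (k : ℕ) (u : V) : ReachWithin A k u u := by
  cases k <;> simp [ReachWithin]

theorem mono {j k : ℕ} {u w : V} (hjk : j ≤ k) (h : ReachWithin A j u w) :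
    ReachWithin A k u w := by
  induction j generalizing k u with
  | zero => cases h; exact refl _ _
  | succ j ih =>
    obtain ⟨k, rfl⟩ : ∃ k', k = k' + 1 := ⟨k - 1, by omega⟩
    rcases h with rfl | ⟨w', huw', h⟩
    · exact Or.inl rfl
    · exact Or.inr ⟨w', huw', ih (by omega) h⟩

theorem trans {j k : ℕ} {u w z : V} (h₁ : ReachWithin A j u w) (h₂ : ReachWithin A k w z) :
    ReachWithin A (j + k) u z := by
  induction j generalizing u with
  | zero => cases h₁; simpa using h₂
  | succ j ih =>
    rcases h₁ with rfl | ⟨w', huw', h₁⟩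
    · exact h₂.mono (by omega)
    · rw [Nat.add_right_comm]
      exact Or.inr ⟨w', huw', ih h₁⟩

theorem of_adj {u w : V} (h : A u w) : ReachWithin A 1 u w :=
  Or.inr ⟨w, h, rfl⟩

theorem eq_or_exists_adj_last {k : ℕ} {u z : V} (h : ReachWithin A (k + 1) u z) :
    u = z ∨ ∃ w, ReachWithin A k u w ∧ A w z := by
  induction k generalizing u with
  | zero =>
    rcases h with rfl | ⟨w, huw, rfl⟩
    · exact Or.inl rfl
    · exact Or.inr ⟨u, rfl, huw⟩
  | succ k ih =>
    rcases h with rfl | ⟨w, huw, h⟩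
    · exact Or.inl rfl
    · rcases ih h with rfl | ⟨w', h, hw'z⟩
      · exact Or.inr ⟨u, refl _ _, huw⟩
      · exact Or.inr ⟨w', Or.inr ⟨w, huw, h⟩, hw'z⟩

end ReachWithin

-- Distance from `v`; it is `0` (`sInf ∅`) when `u` is unreachable, hence the reachability
-- hypotheses below.
noncomputable def level (A : V → V → Prop) (v u : V) : ℕ :=
  sInf {k | ReachWithin A k v u}

section Level

variable {A : V → V → Prop} {v u w : V} {i k : ℕ}

theorem level_le (h : ReachWithin A k v u) : level A v u ≤ k :=
  Nat.sInf_le h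

theorem reachWithin_level (h : ReachWithin A k v u) : ReachWithin A (level A v u) v u :=
  Nat.sInf_mem (s := {k | ReachWithin A k v u}) ⟨k, h⟩

theorem eq_of_level_eq_zero (h : ReachWithin A k v u) (h₀ : level A v u = 0) : u = v := by
  have := reachWithin_level h
  rw [h₀] at this
  exact this.symm

theorem level_le_level_add_one (h : ReachWithin A k v u) (huw : A u w) :
    level A v w ≤ level A v u + 1 :=
  level_le ((reachWithin_level h).trans (.of_adj huw))

theorem exists_adj_level_eq (h : ReachWithin A k v u) (hu : level A v u = i + 1) :
    ∃ w, ReachWithin A i v w ∧ A w u ∧ level A v w = i := by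
  have hvu := reachWithin_level h
  rw [hu] at hvu
  rcases hvu.eq_or_exists_adj_last with rfl | ⟨w, hvw, hwu⟩
  · have := level_le (ReachWithin.refl (A := A) 0 v)
    omega
  · have := level_le hvw
    have := level_le_level_add_one hvw hwu
    exact ⟨w, hvw, hwu, by omega⟩

theorem exists_level_eq_of_le (h : ReachWithin A k v u) (hi : i ≤ level A v u) :
    ∃ w, level A v w = i := by
  obtain ⟨d, hd⟩ := Nat.exists_eq_add_of_le hi
  induction d generalizing u k with
  | zero => exact ⟨u, hd⟩
  | succ d ih =>
    obtain ⟨w, hvw, -, hw⟩ := exists_adj_level_eq (i := i + d) h hd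
    exact ih hvw (by omega) hw

theorem even_level_iff {P : V → Prop} (hbip : Bipartition A P) (h : ReachWithin A k v u) :
    Even (level A v u) ↔ (P u ↔ P v) := by
  induction hl : level A v u generalizing u k with
  | zero => simp [eq_of_level_eq_zero h hl]
  | succ i ih =>
    obtain ⟨w, hvw, hwu, hw⟩ := exists_adj_level_eq h hl
    have := ih hvw hw
    have := hbip w u hwu
    rw [Nat.even_add_one]
    tauto

theorem odd_level_add_level_of_adj {P : V → Prop} (hbip : Bipartition A P)
    (h : ReachWithin A k v u) (huw : A u w) : Odd (level A v u + level A v w) := by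
  have hu := even_level_iff hbip h
  have hw := even_level_iff hbip (h.trans (.of_adj huw))
  have := hbip u w huw
  rw [Nat.odd_add, ← Nat.not_even_iff_odd]
  tauto

end Level

def IsAdmissible (ℓ : V → ℕ) (u w : V) : Prop :=
  ℓ w ≤ ℓ u + 1 ∧ Odd (ℓ u + ℓ w)

open Classical in
theorem card_admissible_le [Fintype V] (ℓ : V → ℕ) (r : ℕ) (hℓ : ∀ u, ℓ u ≤ r) :
    #{p : V × V | IsAdmissible ℓ p.1 p.2} ≤
      ∑ i ∈ range r, #{u | ℓ u = i} * #{u | ℓ u = i + 1} +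
        #{u | Odd (ℓ u)} * #{u | Even (ℓ u)} := by
  set up := (range r).biUnion fun i =>
    ({u | ℓ u = i} : Finset V) ×ˢ ({u | ℓ u = i + 1} : Finset V)
  -- a pair of opposite parity, oriented towards the lower level
  set down := (({u | Odd (ℓ u)} : Finset V) ×ˢ ({u | Even (ℓ u)} : Finset V)).image
    fun p => if ℓ p.2 < ℓ p.1 then p else p.swap
  have hsub : ({p : V × V | IsAdmissible ℓ p.1 p.2} : Finset (V × V)) ⊆ up ∪ down := by
    rintro ⟨u, w⟩ huw
    simp only [mem_filter, mem_univ, true_and, IsAdmissible, Nat.odd_iff] at huw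
    have hw := hℓ w
    by_cases hup : ℓ w = ℓ u + 1
    · exact mem_union_left _ (mem_biUnion.2 ⟨ℓ u, mem_range.2 (by omega), by simp [hup]⟩)
    · refine mem_union_right _ (mem_image.2 ?_)
      simp only [Prod.exists, mem_product, mem_filter, mem_univ, true_and, Nat.odd_iff,
        Nat.even_iff]
      by_cases hu : ℓ u % 2 = 1
      · exact ⟨u, w, by omega, by simp only [ite_eq_left_iff, not_lt]; omega⟩
      · exact ⟨w, u, by omega, by simp only [Prod.swap_prod_mk, ite_eq_right_iff]; omega⟩
  calc _ ≤ #(up ∪ down) := card_le_card hsub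
    _ ≤ #up + #down := card_union_le _ _
    _ ≤ _ := add_le_add (card_biUnion_le.trans (by simp only [card_product, le_refl]))
        (card_image_le.trans (card_product _ _).le)

theorem exists_add_eq_sum_and_sum_mul_succ_le (b : ℕ → ℕ) (r : ℕ) :
    ∃ s t, s + t = ∑ i ∈ range (r + 1), b i ∧ b r ≤ s ∧
      ∑ i ∈ range r, b i * b (i + 1) ≤ s * t := by
  induction r with
  | zero => exact ⟨b 0, 0, by simp⟩
  | succ r ih =>
    -- `s` and `t` are the sums of `b` over the indices of the parity of `r` and of the other one
    obtain ⟨s, t, hst, hs, hsum⟩ := ih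
    refine ⟨t + b (r + 1), s, by rw [sum_range_succ _ (r + 1), ← hst]; ring, le_add_self, ?_⟩
    rw [sum_range_succ]
    nlinarith

theorem four_mul_sum_mul_succ_le_sq (b : ℕ → ℕ) (r : ℕ) :
    4 * ∑ i ∈ range r, b i * b (i + 1) ≤ (∑ i ∈ range (r + 1), b i) ^ 2 := by
  obtain ⟨s, t, hst, -, hsum⟩ := exists_add_eq_sum_and_sum_mul_succ_le b r
  rw [← hst]
  nlinarith [four_mul_le_sq_add s t]

theorem four_mul_sum_mul_succ_le (a : ℕ → ℕ) (r : ℕ) (ha : ∀ i ≤ r, 1 ≤ a i) :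
    4 * ((∑ i ∈ range r, a i * a (i + 1) : ℕ) : ℤ) ≤
      ((∑ i ∈ range (r + 1), a i : ℕ) - r + 3 : ℤ) ^ 2 + 4 * r - 16 := by
  set b : ℕ → ℕ := fun i => a i - 1
  have hab : ∀ i ≤ r, a i = b i + 1 := fun i hi => (Nat.sub_add_cancel (ha i hi)).symm
  have hsum : ∑ i ∈ range (r + 1), a i = ∑ i ∈ range (r + 1), b i + (r + 1) := by
    rw [sum_congr rfl fun i hi => hab i (Nat.lt_succ_iff.1 (mem_range.1 hi)), sum_add_distrib]
    simp
  have hprod : ∑ i ∈ range r, a i * a (i + 1) = ∑ i ∈ range r, b i * b (i + 1) +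
      ∑ i ∈ range r, b i + ∑ i ∈ range r, b (i + 1) + r := by
    rw [sum_congr rfl fun i hi => by
      rw [hab i (mem_range.1 hi).le, hab (i + 1) (mem_range.1 hi)]]
    simp only [sum_add_distrib, add_mul, mul_add, mul_one, one_mul, sum_const, card_range,
      smul_eq_mul]
    ring
  have hlow : ∑ i ∈ range r, b i ≤ ∑ i ∈ range (r + 1), b i := by
    rw [sum_range_succ]; exact le_self_add
  have hhigh : ∑ i ∈ range r, b (i + 1) ≤ ∑ i ∈ range (r + 1), b i := by
    rw [sum_range_succ']; exact le_self_add
  have hsq := four_mul_sum_mul_succ_le_sq b r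
  rw [hsum, hprod]
  push_cast
  nlinarith

section Centre

variable {A : V → V → Prop} {r : ℕ} {v : V}

theorem exists_level_eq (hv : outEccLe A r v) (hv' : ¬ outEccLe A (r - 1) v) {i : ℕ}
    (hi : i ≤ r) : ∃ u, level A v u = i := by
  obtain ⟨u, hu⟩ : ∃ u, ¬ ReachWithin A (r - 1) v u := by simpa [outEccLe] using hv'
  have hur : level A v u = r := by
    have := level_le (hv u)
    by_contra hne
    exact hu ((reachWithin_level (hv u)).mono (by omega))
  exact exists_level_eq_of_le (hv u) (hur ▸ hi)

theorem reachWithin_add_of_forall_level_le (hv : outEccLe A r v) {x : V} {m d : ℕ}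
    (h : ∀ z, level A v z ≤ m → ReachWithin A d x z) (k : ℕ) :
    ∀ z, level A v z ≤ m + k → ReachWithin A (d + k) x z := by
  induction k with
  | zero => exact h
  | succ k ih =>
    intro z hz
    by_cases hzk : level A v z ≤ m + k
    · exact (ih z hzk).mono (by omega)
    · obtain ⟨w, -, hwz, hw⟩ := exists_adj_level_eq (i := m + k) (hv z) (by omega)
      exact (ih w hw.le).trans (.of_adj hwz)

theorem exists_not_adj_of_odd_level (hv : outEccLe A r v) (hr : 3 ≤ r)
    (hrad : ∀ x, ¬ outEccLe A (r - 1) x) {x : V} (hx : Odd (level A v x)) :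
    ∃ w, Even (level A v w) ∧ level A v w ≤ level A v x + 1 ∧ ¬ A x w := by
  by_contra! hadj
  rw [Nat.odd_iff] at hx
  have hnear : ∀ z, level A v z ≤ level A v x + 2 → ReachWithin A 2 x z := by
    intro z hz
    rcases Nat.even_or_odd (level A v z) with hze | hzo
    · have hzx : level A v z ≤ level A v x + 1 := by rw [Nat.even_iff] at hze; omega
      exact (ReachWithin.of_adj (hadj z hze hzx)).mono (by norm_num)
    · rw [Nat.odd_iff] at hzo
      obtain ⟨w, -, hwz, hw⟩ := exists_adj_level_eq (i := level A v z - 1) (hv z) (by omega)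
      have hwe : Even (level A v w) := by rw [Nat.even_iff]; omega
      exact (ReachWithin.of_adj (hadj w hwe (by omega))).trans (.of_adj hwz)
  -- so `x` reaches every vertex within `max 2 (r - level x) ≤ r - 1` steps
  refine hrad x fun z => ?_
  have := level_le (hv z)
  exact (reachWithin_add_of_forall_level_le hv hnear (r - 2 - level A v x) z (by omega)).mono
    (by omega)

open Classical in
theorem arcCard_add_card_odd_le [Fintype V] {P : V → Prop} (hbip : Bipartition A P)
    (hv : outEccLe A r v) (hr : 3 ≤ r) (hrad : ∀ x, ¬ outEccLe A (r - 1) x) :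
    arcCard A + #{x | Odd (level A v x)} ≤
      #{p : V × V | IsAdmissible (level A v) p.1 p.2} := by
  choose! miss hmiss using fun x (hx : Odd (level A v x)) =>
    exists_not_adj_of_odd_level hv hr hrad hx
  set arcs : Finset (V × V) := {p | A p.1 p.2}
  set missing := ({x | Odd (level A v x)} : Finset V).image fun x => (x, miss x)
  have harcs : arcCard A = #arcs := by
    rw [arcCard, ← Set.ncard_coe_finset]
    simp [arcs]
  have hmissing : #missing = #{x | Odd (level A v x)} :=
    card_image_of_injective _ fun x y h => (Prod.mk.inj h).1
  have hdisj : Disjoint arcs missing := by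
    simp only [disjoint_left, arcs, missing, mem_filter, mem_univ, true_and, mem_image]
    rintro _ harc ⟨x, hx, rfl⟩
    exact (hmiss x hx).2.2 harc
  have hsub : arcs ∪ missing ⊆ ({p : V × V | IsAdmissible (level A v) p.1 p.2} : Finset _) := by
    intro p hp
    simp only [mem_union, arcs, missing, mem_filter, mem_univ, true_and, mem_image] at hp ⊢
    rcases hp with harc | ⟨x, hx, rfl⟩
    · exact ⟨level_le_level_add_one (hv _) harc, odd_level_add_level_of_adj hbip (hv _) harc⟩
    · exact ⟨(hmiss x hx).2.1, hx.add_even (hmiss x hx).1⟩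
  rw [harcs, ← hmissing, ← card_union_of_disjoint hdisj]
  exact card_le_card hsub

end Centre

theorem stmt9_general [Fintype V] (A : V → V → Prop)
    (P : V → Prop) (hbip : Bipartition A P)
    (r : ℕ) (hr : 3 ≤ r) (hrad : outRadiusIs A r) :
    (arcCard A : ℤ) ≤
      ((Fintype.card V : ℤ) * ((Fintype.card V : ℤ) - 2) + 3) / 4 + (r : ℤ) - 4 +
        ((Fintype.card V : ℤ) - (r : ℤ) + 3) ^ 2 / 4 := by
  classical
  obtain ⟨v, hv⟩ := hrad.1
  set ℓ := level A v
  set a : ℕ → ℕ := fun i => #{u | ℓ u = i}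
  set T := ∑ i ∈ range r, a i * a (i + 1)
  set O := #{u | Odd (ℓ u)}
  set E := #{u | Even (ℓ u)}
  have harcs : arcCard A + O ≤ T + O * E :=
    (arcCard_add_card_odd_le hbip hv hr hrad.2).trans
      (card_admissible_le ℓ r fun u => level_le (hv u))
  have hT := four_mul_sum_mul_succ_le a r fun i hi =>
    let ⟨u, hu⟩ := exists_level_eq hv (hrad.2 v) hi
    card_pos.2 ⟨u, by simpa using hu⟩
  have hsum : ∑ i ∈ range (r + 1), a i = Fintype.card V :=
    (card_eq_sum_card_fiberwise fun u _ => mem_range.2 (Nat.lt_succ_of_le (level_le (hv u)))).symm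
  have hOE : O + E = Fintype.card V := by
    simpa [O, E, Nat.not_odd_iff_even] using
      card_filter_add_card_filter_not (s := univ) fun u => Odd (ℓ u)
  have hOE' : 4 * ((O : ℤ) * (E - 1)) ≤ (Fintype.card V : ℤ) * (Fintype.card V - 2) + 1 := by
    rw [← hOE]
    push_cast
    nlinarith [sq_nonneg ((O : ℤ) - E + 1)]
  have harcs' : (arcCard A : ℤ) ≤ T + O * (E - 1) := by
    have : (arcCard A + O : ℤ) ≤ T + O * E := by exact_mod_cast harcs
    linarith
  rw [hsum] at hT
  omega

/-- A bipartite digraph of order `n` with out-radius `r ≥ 3` has at most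
`⌈n(n-2)/4⌉ + r - 4 + ⌊(n-r+3)²/4⌋` arcs. -/
theorem stmt9 [Fintype V] (A : V → V → Prop) (hirr : Irreflexive A)
    (P : V → Prop) (hbip : Bipartition A P)
    (r : ℕ) (hr : 3 ≤ r) (hrad : outRadiusIs A r) :
    (arcCard A : ℤ) ≤
      ((Fintype.card V : ℤ) * ((Fintype.card V : ℤ) - 2) + 3) / 4 + (r : ℤ) - 4 +
        ((Fintype.card V : ℤ) - (r : ℤ) + 3) ^ 2 / 4 :=
  stmt9_general A P hbip r hr hrad
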